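/- Let A be the standard middle-thirds Cantor set in [0,1] with the Euclidean metric. For every natural number N, the (2^N + 1)-point best-packing distance of A equals 3^{-N}. -/

import Mathlib

open scoped BigOperators
open Filter Metric

/-- Separation distance of an `N`-point configuration. -/
noncomputable def sep {E : Type*} [MetricSpace E] {N : ℕ} (x : Fin N → E) : ℝ :=
  ⨅ p : {p : Fin N × Fin N // p.1 ≠ p.2}, dist (x p.1.1) (x p.1.2)

/-- Mesh norm (covering radius) of a configuration relative to a set `S`. -/
noncomputable def mesh {E : Type*} [MetricSpace E] {N : ℕ} (S : Set E) (x : Fin N → E) : ℝ :=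
  ⨆ y : S, ⨅ i, dist (y : E) (x i)

/-- `N`-point best-packing distance of the set `S`. -/
noncomputable def packDist {E : Type*} [MetricSpace E] (S : Set E) (N : ℕ) : ℝ :=
  ⨆ x : {x : Fin N → E // Function.Injective x ∧ ∀ i, x i ∈ S}, sep x.1

/-- Riesz `s`-energy of a configuration. -/
noncomputable def energy {E : Type*} [MetricSpace E] {N : ℕ} (s : ℝ) (x : Fin N → E) : ℝ :=
  ∑ i, ∑ j ∈ Finset.univ.filter (· ≠ i), dist (x i) (x j) ^ (-s)

/-- Minimal `N`-point Riesz `s`-energy of the set `S`. -/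
noncomputable def minEnergy {E : Type*} [MetricSpace E] (S : Set E) (N : ℕ) (s : ℝ) : ℝ :=
  ⨅ x : {x : Fin N → E // Function.Injective x ∧ ∀ i, x i ∈ S}, energy s x.1

/-!
The level-`N` pre-Cantor set is a union of `2 ^ N` closed intervals of length `3 ^ (-N)`, so by
pigeonhole two of any `2 ^ N + 1` points of the Cantor set lie in a common interval. Conversely,
the `2 ^ (N + 1)` endpoints of these intervals lie in the Cantor set and are pairwise at
distance at least `3 ^ (-N)`.
-/

open Finset

section Packing

variable {E : Type*} [MetricSpace E] {M : ℕ}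

lemma sep_le_dist (x : Fin M → E) {i j : Fin M} (hij : i ≠ j) : sep x ≤ dist (x i) (x j) :=
  ciInf_le ⟨0, by rintro _ ⟨p, rfl⟩; exact dist_nonneg⟩
    (⟨(i, j), hij⟩ : {p : Fin M × Fin M // p.1 ≠ p.2})

lemma le_sep {x : Fin M → E} {d : ℝ} (hM : 1 < M)
    (h : ∀ i j, i ≠ j → d ≤ dist (x i) (x j)) : d ≤ sep x := by
  have : Nonempty {p : Fin M × Fin M // p.1 ≠ p.2} :=
    ⟨⟨(⟨0, by omega⟩, ⟨1, hM⟩), by simp [Fin.ext_iff]⟩⟩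
  exact le_ciInf fun p => h _ _ p.2

lemma packDist_le {S : Set E} {d : ℝ} (hd : 0 ≤ d)
    (h : ∀ x : Fin M → E, Function.Injective x → (∀ i, x i ∈ S) →
      ∃ i j, i ≠ j ∧ dist (x i) (x j) ≤ d) :
    packDist S M ≤ d :=
  Real.iSup_le (fun ⟨x, hinj, hxS⟩ => by
    obtain ⟨i, j, hij, hle⟩ := h x hinj hxS
    exact (sep_le_dist x hij).trans hle) hd

lemma le_packDist {S : Set E} {d : ℝ} (hS : Bornology.IsBounded S) (hM : 1 < M)
    {x : Fin M → E} (hinj : Function.Injective x) (hxS : ∀ i, x i ∈ S)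
    (h : ∀ i j, i ≠ j → d ≤ dist (x i) (x j)) :
    d ≤ packDist S M := by
  have hbdd : BddAbove (Set.range fun y :
      {y : Fin M → E // Function.Injective y ∧ ∀ i, y i ∈ S} => sep y.1) := by
    refine ⟨Metric.diam S, ?_⟩
    rintro _ ⟨⟨y, -, hyS⟩, rfl⟩
    have h01 : (⟨0, by omega⟩ : Fin M) ≠ ⟨1, hM⟩ := by simp [Fin.ext_iff]
    exact (sep_le_dist y h01).trans (Metric.dist_le_diam_of_mem hS (hyS _) (hyS _))
  exact (le_sep hM h).trans (le_ciSup hbdd ⟨x, hinj, hxS⟩)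

lemma le_packDist_of_finset {S : Set E} {d : ℝ} (hS : Bornology.IsBounded S) (hM : 1 < M)
    {t : Finset E} (htS : ↑t ⊆ S) (hMt : M ≤ #t)
    (ht : (t : Set E).Pairwise fun a b => d ≤ dist a b) :
    d ≤ packDist S M := by
  let x : Fin M → E := fun i => t.equivFin.symm (Fin.castLE hMt i)
  have hinj : Function.Injective x := fun i j hij =>
    Fin.castLE_injective hMt (t.equivFin.symm.injective (Subtype.ext hij))
  exact le_packDist hS hM hinj (fun i => htS (t.equivFin.symm _).2)
    fun i j hij => ht (t.equivFin.symm _).2 (t.equivFin.symm _).2 (hinj.ne hij)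

end Packing

lemma one_mem_preCantorSet (n : ℕ) : (1 : ℝ) ∈ preCantorSet n := by
  induction n with
  | zero => simp
  | succ n ih => exact Or.inr ⟨1, ih, by norm_num⟩

lemma one_mem_cantorSet : (1 : ℝ) ∈ cantorSet :=
  Set.mem_iInter.mpr one_mem_preCantorSet

/-- `cantorRefine^[n] {0}` is the set of left endpoints of the `2 ^ n` intervals making up
`preCantorSet n`, and `cantorRefine^[n] {0, 1}` the set of all their endpoints. -/
noncomputable def cantorRefine (s : Finset ℝ) : Finset ℝ :=
  s.image (· / 3) ∪ s.image fun x => (2 + x) / 3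

namespace cantorRefine

lemma card_le (s : Finset ℝ) : #(cantorRefine s) ≤ 2 * #s :=
  (card_union_le _ _).trans (by grind [card_image_le])

lemma card_eq {s : Finset ℝ} (hs : ↑s ⊆ Set.Icc (0 : ℝ) 1) :
    #(cantorRefine s) = 2 * #s := by
  have hdisj : Disjoint (s.image (· / 3)) (s.image fun x => (2 + x) / 3) := by
    simp only [disjoint_left, mem_image, not_exists, not_and]
    rintro _ ⟨x, hx, rfl⟩ y hy hxy
    linarith [(hs hx).2, (hs hy).1]
  rw [cantorRefine, card_union_of_disjoint hdisj,
    card_image_of_injective _ fun x y (h : x / 3 = y / 3) => by linarith,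
    card_image_of_injective _ fun x y (h : (2 + x) / 3 = (2 + y) / 3) => by linarith]
  ring

lemma subset_cantorSet {s : Finset ℝ} (hs : ↑s ⊆ cantorSet) :
    ↑(cantorRefine s) ⊆ cantorSet := by
  rw [cantorRefine, coe_union, coe_image, coe_image, cantorSet_eq_union_halves]
  exact Set.union_subset_union (Set.image_mono hs) (Set.image_mono hs)

lemma pairwise {s : Finset ℝ} (hs : ↑s ⊆ Set.Icc (0 : ℝ) 1) {d : ℝ} (hd : d ≤ 1)
    (hsep : (s : Set ℝ).Pairwise fun a b => d ≤ dist a b) :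
    (cantorRefine s : Set ℝ).Pairwise fun a b => d / 3 ≤ dist a b := by
  have hscale : ∀ x y : ℝ, dist (x / 3) (y / 3) = dist x y / 3 := fun x y => by
    rw [Real.dist_eq, Real.dist_eq, ← sub_div, abs_div, abs_of_pos (by norm_num : (0 : ℝ) < 3)]
  have hcross : ∀ x ∈ s, ∀ y ∈ s, d / 3 ≤ dist (x / 3) ((2 + y) / 3) := by
    intro x hx y hy
    rw [Real.dist_eq, abs_sub_comm, abs_of_pos (by linarith [(hs hx).2, (hs hy).1])]
    linarith [(hs hx).2, (hs hy).1]
  simp only [cantorRefine, coe_union, coe_image]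
  rintro _ (⟨x, hx, rfl⟩ | ⟨x, hx, rfl⟩) _ (⟨y, hy, rfl⟩ | ⟨y, hy, rfl⟩) hne
  · rw [hscale]
    exact div_le_div_of_nonneg_right (hsep hx hy (ne_of_apply_ne (· / 3) hne)) (by norm_num)
  · exact hcross x hx y hy
  · exact dist_comm ((2 + x) / 3) (y / 3) ▸ hcross y hy x hx
  · rw [hscale, dist_add_left]
    exact div_le_div_of_nonneg_right
      (hsep hx hy (ne_of_apply_ne (fun x => (2 + x) / 3) hne)) (by norm_num)

end cantorRefine

lemma card_cantorRefine_iterate_zero_le (n : ℕ) : #(cantorRefine^[n] {0}) ≤ 2 ^ n := by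
  induction n with
  | zero => simp
  | succ n ih =>
    rw [Function.iterate_succ_apply', pow_succ]
    linarith [cantorRefine.card_le (cantorRefine^[n] {0})]

lemma exists_mem_cantorRefine_iterate_zero {n : ℕ} {x : ℝ} (hx : x ∈ preCantorSet n) :
    ∃ a ∈ cantorRefine^[n] {0}, x ∈ Set.Icc a (a + (1 / 3) ^ n) := by
  induction n generalizing x with
  | zero => exact ⟨0, by simpa using hx⟩
  | succ n ih =>
    rw [Function.iterate_succ_apply']
    obtain ⟨y, hy, rfl⟩ | ⟨y, hy, rfl⟩ := hx <;> obtain ⟨a, ha, hya⟩ := ih hy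
    · exact ⟨a / 3, mem_union_left _ (mem_image_of_mem _ ha),
        by constructor <;> linarith [hya.1, hya.2, pow_succ (1 / 3 : ℝ) n]⟩
    · exact ⟨(2 + a) / 3, mem_union_right _ (mem_image_of_mem (fun x => (2 + x) / 3) ha),
        by constructor <;> linarith [hya.1, hya.2, pow_succ (1 / 3 : ℝ) n]⟩

lemma exists_dist_le_of_mem_preCantorSet {ι : Type*} [Fintype ι] {n : ℕ}
    (hcard : 2 ^ n < Fintype.card ι) {x : ι → ℝ} (hx : ∀ i, x i ∈ preCantorSet n) :
    ∃ i j, i ≠ j ∧ dist (x i) (x j) ≤ (1 / 3) ^ n := by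
  choose! a ha hxa using
    fun y (hy : y ∈ preCantorSet n) => exists_mem_cantorRefine_iterate_zero hy
  obtain ⟨i, -, j, -, hij, hfij⟩ := Finset.exists_ne_map_eq_of_card_lt_of_maps_to
    (t := cantorRefine^[n] {0}) ((card_cantorRefine_iterate_zero_le n).trans_lt hcard)
    (f := fun i => a (x i)) fun i _ => ha _ (hx i)
  refine ⟨i, j, hij, ?_⟩
  simpa using Real.dist_le_of_mem_Icc (hxa _ (hx i)) (hfij ▸ hxa _ (hx j))

lemma cantorRefine_iterate_endpoints_subset (n : ℕ) :
    ↑(cantorRefine^[n] {0, 1}) ⊆ cantorSet := by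
  induction n with
  | zero => simp [Set.insert_subset_iff, zero_mem_cantorSet, one_mem_cantorSet]
  | succ n ih => rw [Function.iterate_succ_apply']; exact cantorRefine.subset_cantorSet ih

lemma card_cantorRefine_iterate_endpoints (n : ℕ) :
    #(cantorRefine^[n] {0, 1}) = 2 ^ (n + 1) := by
  induction n with
  | zero => simp
  | succ n ih =>
    rw [Function.iterate_succ_apply', cantorRefine.card_eq
      ((cantorRefine_iterate_endpoints_subset n).trans cantorSet_subset_unitInterval), ih, pow_succ]
    ring

lemma pairwise_cantorRefine_iterate_endpoints (n : ℕ) :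
    (↑(cantorRefine^[n] {0, 1}) : Set ℝ).Pairwise fun a b => (1 / 3) ^ n ≤ dist a b := by
  induction n with
  | zero =>
    simp only [Function.iterate_zero, id_eq, coe_insert, coe_singleton, pow_zero]
    exact Set.pairwise_pair.mpr fun _ => by norm_num
  | succ n ih =>
    rw [Function.iterate_succ_apply', pow_succ, mul_one_div]
    exact cantorRefine.pairwise
      ((cantorRefine_iterate_endpoints_subset n).trans cantorSet_subset_unitInterval)
      (pow_le_one₀ (by norm_num) (by norm_num)) ih

theorem stmt_7 (N : ℕ) :
    packDist cantorSet (2 ^ N + 1) = ((1 : ℝ) / 3) ^ N := by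
  refine le_antisymm (packDist_le (by positivity) fun x _ hx => ?_) ?_
  · exact exists_dist_le_of_mem_preCantorSet (by simp) fun i => Set.iInter_subset _ N (hx i)
  · refine le_packDist_of_finset isCompact_cantorSet.isBounded (by simp [N.two_pow_pos])
      (cantorRefine_iterate_endpoints_subset N) ?_ (pairwise_cantorRefine_iterate_endpoints N)
    rw [card_cantorRefine_iterate_endpoints, pow_succ]
    have := N.two_pow_pos
    omega
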